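/- arXiv:2501.14445 — 2 statements merged into one kernel-verified Lean document; each statement's English description precedes it below -/
import Mathlib

section
/- Let ν be a σ-finite measure on the finite nonempty subsets of Z^d with ν(S_i) < ∞ for each i, and suppose that for every δ ∈ (0,1), ν({Δ : |Δ ∩ Λ_n| ≥ δ|Λ_n|}) → 0 as n → ∞. Then (2n+1)^{−2d} Σ_{i,j ∈ Λ_n} exp(ν(S_i ∩ S_j)) → 1 as n → ∞, assuming ν is translation invariant. -/
/-!
Write `N_n(Δ) = |Δ ∩ Λ_n|` and `c = ν(S_0) = ν(S_i)`. Then `∑_{j ∈ Λ_n} ν(S_i ∩ S_j)` is the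
integral of `N_n` over `S_i`; splitting at the level `N_n ≥ δ |Λ_n|` bounds it by
`|Λ_n| ν(N_n ≥ δ |Λ_n|) + δ |Λ_n| c`, so the mean of `ν(S_i ∩ S_j)` over `Λ_n²` is eventually at
most `ν(N_n ≥ δ |Λ_n|) + δ c` and tends to `0`. As `0 ≤ ν(S_i ∩ S_j) ≤ c` and `e^x ≤ 1 + e^c x`
on `[0, c]`, the mean of the exponentials is squeezed between `1` and `1 + e^c` times that mean.
-/

open MeasureTheory Filter Finset ENNReal

lemma Real.exp_le_one_add_exp_mul {x C : ℝ} (hx : 0 ≤ x) (hxC : x ≤ C) :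
    Real.exp x ≤ 1 + Real.exp C * x := by
  have h : (1 - x) * Real.exp x ≤ 1 :=
    calc (1 - x) * Real.exp x ≤ Real.exp (-x) * Real.exp x := by
          gcongr; exact Real.one_sub_le_exp_neg x
      _ = 1 := by rw [← Real.exp_add, neg_add_cancel, Real.exp_zero]
  nlinarith [mul_le_mul_of_nonneg_left (Real.exp_le_exp.2 hxC) hx]

section CoverCount

variable {α ι : Type*} {S : ι → Set α}

open scoped Classical in
noncomputable def coverCount (S : ι → Set α) (Λ : Finset ι) (a : α) : ℕ := #{i ∈ Λ | a ∈ S i}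

lemma coverCount_eq_sum_indicator (Λ : Finset ι) (a : α) :
    (coverCount S Λ a : ℝ≥0∞) = ∑ i ∈ Λ, (S i).indicator 1 a := by
  classical
  rw [coverCount, Finset.card_filter, Nat.cast_sum]
  refine Finset.sum_congr rfl fun i _ => ?_
  by_cases h : a ∈ S i <;> simp [h]

lemma coverCount_setOf_mem (Λ : Finset ι) (Δ : Set ι) :
    coverCount (fun i => {Δ : Set ι | i ∈ Δ}) Λ Δ = (Δ ∩ Λ).ncard := by
  classical
  rw [coverCount, ← Set.ncard_coe_finset]
  congr 1
  ext i
  simp [and_comm]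

variable [MeasurableSpace α] {ν : Measure α}

lemma sum_measure_inter_eq_setLIntegral_coverCount (hS : ∀ i, MeasurableSet (S i))
    (Λ : Finset ι) (A : Set α) :
    ∑ j ∈ Λ, ν (S j ∩ A) = ∫⁻ a in A, coverCount S Λ a ∂ν := by
  simp_rw [coverCount_eq_sum_indicator]
  rw [lintegral_finsetSum _ fun j _ => measurable_one.indicator (hS j)]
  refine Finset.sum_congr rfl fun j _ => ?_
  rw [lintegral_indicator_one (hS j), Measure.restrict_apply (hS j)]

lemma sum_measure_inter_le (hS : ∀ i, MeasurableSet (S i)) (Λ : Finset ι) (i : ι)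
    (r : ℝ≥0∞) :
    ∑ j ∈ Λ, ν (S i ∩ S j) ≤ #Λ * ν {a | r ≤ coverCount S Λ a} + r * ν (S i) := by
  set D := {a | r ≤ coverCount S Λ a}
  calc ∑ j ∈ Λ, ν (S i ∩ S j)
      ≤ ∑ j ∈ Λ, (ν D + ν (S j ∩ (S i \ D))) := by
        refine Finset.sum_le_sum fun j _ => (measure_le_inter_add_sdiff _ _ D).trans ?_
        gcongr
        · exact Set.inter_subset_right
        · exact fun a ⟨⟨hi, hj⟩, hD⟩ => ⟨hj, hi, hD⟩
    _ = #Λ * ν D + ∫⁻ a in S i \ D, coverCount S Λ a ∂ν := by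
        rw [Finset.sum_add_distrib, Finset.sum_const, nsmul_eq_mul,
          sum_measure_inter_eq_setLIntegral_coverCount hS]
    _ ≤ #Λ * ν D + ∫⁻ _ in S i \ D, r ∂ν := by
        refine add_le_add_right (setLIntegral_mono measurable_const fun a ha => ?_) _
        exact (not_le.1 ha.2).le
    _ ≤ #Λ * ν D + r * ν (S i) := by
        rw [setLIntegral_const]
        gcongr
        exact Set.sdiff_subset

lemma sum_sum_toReal_measure_inter_le (hS : ∀ i, MeasurableSet (S i)) {c : ℝ≥0∞}
    (hc : ∀ i, ν (S i) ≤ c) (hc_top : c ≠ ⊤) (Λ : Finset ι) {δ : ℝ} (hδ : 0 ≤ δ)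
    (hD : ν {a | δ * #Λ ≤ coverCount S Λ a} ≠ ⊤) :
    ∑ i ∈ Λ, ∑ j ∈ Λ, (ν (S i ∩ S j)).toReal ≤
      #Λ ^ 2 * ((ν {a | δ * #Λ ≤ coverCount S Λ a}).toReal + δ * c.toReal) := by
  set D := {a | δ * #Λ ≤ coverCount S Λ a}
  have hD_eq : {a | ENNReal.ofReal (δ * #Λ) ≤ coverCount S Λ a} = D := by
    ext a
    simp [D, ENNReal.ofReal_le_iff_le_toReal]
  have hinter_ne_top : ∀ i j, ν (S i ∩ S j) ≠ ⊤ := fun i j =>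
    ne_top_of_le_ne_top hc_top ((measure_mono Set.inter_subset_left).trans (hc i))
  have hsum : ∑ i ∈ Λ, ∑ j ∈ Λ, ν (S i ∩ S j) ≤
      #Λ * (#Λ * ν D + ENNReal.ofReal (δ * #Λ) * c) := by
    rw [← nsmul_eq_mul, ← Finset.sum_const]
    refine Finset.sum_le_sum fun i _ => ?_
    rw [← hD_eq]
    exact (sum_measure_inter_le hS Λ i _).trans (by gcongr; exact hc i)
  calc ∑ i ∈ Λ, ∑ j ∈ Λ, (ν (S i ∩ S j)).toReal
      = (∑ i ∈ Λ, ∑ j ∈ Λ, ν (S i ∩ S j)).toReal := by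
        simp [ENNReal.toReal_sum, hinter_ne_top]
    _ ≤ (#Λ * (#Λ * ν D + ENNReal.ofReal (δ * #Λ) * c)).toReal :=
        ENNReal.toReal_mono (by finiteness) hsum
    _ = #Λ ^ 2 * ((ν D).toReal + δ * c.toReal) := by
        rw [ENNReal.toReal_mul, ENNReal.toReal_add (by finiteness) (by finiteness)]
        simp [ENNReal.toReal_ofReal, hδ]
        ring

lemma tendsto_avg_toReal_measure_inter_zero (hS : ∀ i, MeasurableSet (S i)) {c : ℝ≥0∞}
    (hc : ∀ i, ν (S i) ≤ c) (hc_top : c ≠ ⊤) (Λ : ℕ → Finset ι) (hΛ : ∀ n, (Λ n).Nonempty)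
    (hdens : ∀ δ ∈ Set.Ioo (0 : ℝ) 1,
      Tendsto (fun n => ν {a | δ * #(Λ n) ≤ coverCount S (Λ n) a}) atTop (nhds 0)) :
    Tendsto (fun n => ((#(Λ n) : ℝ) ^ 2)⁻¹ * ∑ i ∈ Λ n, ∑ j ∈ Λ n, (ν (S i ∩ S j)).toReal)
      atTop (nhds 0) := by
  set C := c.toReal
  refine tendsto_order.2 ⟨fun b hb => Eventually.of_forall fun n => hb.trans_le (by positivity),
    fun ε hε => ?_⟩
  set δ : ℝ := min (1 / 2) (ε / (2 * (C + 1)))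
  have hδ : δ ∈ Set.Ioo (0 : ℝ) 1 := ⟨by positivity, by simp [δ]; norm_num⟩
  have hδC : δ * C < ε / 2 := by
    have : δ * (2 * (C + 1)) ≤ ε := (le_div_iff₀ (by positivity)).1 (min_le_right _ _)
    nlinarith [hδ.1]
  filter_upwards [(hdens δ hδ).eventually_lt_const (ENNReal.ofReal_pos.2 (half_pos hε))]
    with n hn
  have hm : (0 : ℝ) < (#(Λ n) : ℝ) ^ 2 := by have := (hΛ n).card_pos; positivity
  have ht : (ν {a | δ * #(Λ n) ≤ coverCount S (Λ n) a}).toReal < ε / 2 :=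
    (ENNReal.toReal_lt_toReal hn.ne_top ENNReal.ofReal_ne_top).2 hn |>.trans_eq
      (ENNReal.toReal_ofReal (by positivity))
  calc ((#(Λ n) : ℝ) ^ 2)⁻¹ * ∑ i ∈ Λ n, ∑ j ∈ Λ n, (ν (S i ∩ S j)).toReal
      ≤ (ν {a | δ * #(Λ n) ≤ coverCount S (Λ n) a}).toReal + δ * C := by
        rw [inv_mul_le_iff₀ hm]
        exact sum_sum_toReal_measure_inter_le hS hc hc_top (Λ n) hδ.1.le hn.ne_top
    _ < ε := by linarith

theorem tendsto_avg_exp_toReal_measure_inter_one (hS : ∀ i, MeasurableSet (S i)) {c : ℝ≥0∞}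
    (hc : ∀ i, ν (S i) ≤ c) (hc_top : c ≠ ⊤) (Λ : ℕ → Finset ι) (hΛ : ∀ n, (Λ n).Nonempty)
    (hdens : ∀ δ ∈ Set.Ioo (0 : ℝ) 1,
      Tendsto (fun n => ν {a | δ * #(Λ n) ≤ coverCount S (Λ n) a}) atTop (nhds 0)) :
    Tendsto (fun n => ((#(Λ n) : ℝ) ^ 2)⁻¹ *
        ∑ i ∈ Λ n, ∑ j ∈ Λ n, Real.exp (ν (S i ∩ S j)).toReal) atTop (nhds 1) := by
  set E := Real.exp c.toReal
  have hupper := (tendsto_avg_toReal_measure_inter_zero hS hc hc_top Λ hΛ hdens).const_mul E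
    |>.const_add 1
  rw [mul_zero, add_zero] at hupper
  refine tendsto_of_tendsto_of_tendsto_of_le_of_le tendsto_const_nhds hupper (fun n => ?_)
    (fun n => ?_)
  all_goals
    have hm : (0 : ℝ) < (#(Λ n) : ℝ) ^ 2 := by have := (hΛ n).card_pos; positivity
    have hsum_one : ∑ i ∈ Λ n, ∑ j ∈ Λ n, (1 : ℝ) = (#(Λ n) : ℝ) ^ 2 := by simp [sq]
  · rw [le_inv_mul_iff₀ hm, mul_one, ← hsum_one]
    gcongr with i _ j _
    exact Real.one_le_exp ENNReal.toReal_nonneg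
  · have hexp : ∀ i j, Real.exp (ν (S i ∩ S j)).toReal ≤ 1 + E * (ν (S i ∩ S j)).toReal :=
      fun i j => Real.exp_le_one_add_exp_mul ENNReal.toReal_nonneg <|
        ENNReal.toReal_mono hc_top ((measure_mono Set.inter_subset_left).trans (hc i))
    rw [inv_mul_le_iff₀ hm]
    calc ∑ i ∈ Λ n, ∑ j ∈ Λ n, Real.exp (ν (S i ∩ S j)).toReal
        ≤ ∑ i ∈ Λ n, ∑ j ∈ Λ n, (1 + E * (ν (S i ∩ S j)).toReal) := by gcongr; exact hexp _ _
      _ = _ := by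
        simp only [Finset.sum_add_distrib, hsum_one, ← Finset.mul_sum]
        field_simp

end CoverCount

lemma measure_setOf_mem_eq_of_measurePreserving {G : Type*} [AddGroup G]
    [MeasurableSpace (Set G)] {ν : Measure (Set G)} {i : G}
    (hi : MeasurableSet {Δ : Set G | i ∈ Δ})
    (hinv : MeasurePreserving (Set.image (fun y => i + y)) ν ν) :
    ν {Δ : Set G | i ∈ Δ} = ν {Δ : Set G | 0 ∈ Δ} := by
  rw [← hinv.measure_preimage hi.nullMeasurableSet]
  congr 1
  ext Δ
  simp

lemma card_piFinset_Icc (d n : ℕ) :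
    #(Fintype.piFinset fun _ : Fin d => Finset.Icc (-(n : ℤ)) n) = (2 * n + 1) ^ d := by
  rw [Fintype.card_piFinset, Int.card_Icc]
  simp only [prod_const, card_univ, Fintype.card_fin]
  congr 1
  omega

theorem stmt_8_general {d : ℕ} [MeasurableSpace (Set (Fin d → ℤ))]
    (ν : Measure (Set (Fin d → ℤ)))
    (hm : ∀ i : Fin d → ℤ, MeasurableSet {Δ : Set (Fin d → ℤ) | i ∈ Δ})
    (hinv : ∀ x : Fin d → ℤ,
      MeasurePreserving (Set.image (fun y => x + y)) ν ν)
    (hfin : ∀ i : Fin d → ℤ, ν {Δ : Set (Fin d → ℤ) | i ∈ Δ} ≠ ⊤)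
    (Λ : ℕ → Finset (Fin d → ℤ))
    (hΛ : ∀ n, Λ n = Fintype.piFinset fun _ : Fin d => Finset.Icc (-(n : ℤ)) n)
    (hdens : ∀ δ : ℝ, δ ∈ Set.Ioo (0 : ℝ) 1 →
      Tendsto (fun n : ℕ =>
          ν {Δ : Set (Fin d → ℤ) |
            δ * ((Λ n).card : ℝ) ≤ ((Δ ∩ (↑(Λ n) : Set (Fin d → ℤ))).ncard : ℝ)})
        atTop (nhds 0)) :
    Tendsto (fun n : ℕ =>
        ((2 * (n : ℝ) + 1) ^ (2 * d))⁻¹ *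
          ∑ i ∈ Λ n, ∑ j ∈ Λ n,
            Real.exp ((ν ({Δ : Set (Fin d → ℤ) | i ∈ Δ} ∩
                {Δ : Set (Fin d → ℤ) | j ∈ Δ})).toReal))
      atTop (nhds 1) := by
  have hcard : ∀ n, #(Λ n) = (2 * n + 1) ^ d := fun n => by rw [hΛ, card_piFinset_Icc]
  have hdens' : ∀ δ ∈ Set.Ioo (0 : ℝ) 1, Tendsto (fun n => ν {Δ | δ * #(Λ n) ≤
      coverCount (fun i => {Δ : Set (Fin d → ℤ) | i ∈ Δ}) (Λ n) Δ}) atTop (nhds 0) := by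
    simpa only [coverCount_setOf_mem] using hdens
  convert tendsto_avg_exp_toReal_measure_inter_one hm
    (fun i => (measure_setOf_mem_eq_of_measurePreserving (hm i) (hinv i)).le) (hfin 0) Λ
    (fun n => Finset.card_pos.1 (by rw [hcard]; positivity)) hdens' using 3 with n
  rw [hcard, pow_mul', Nat.cast_pow]
  push_cast
  ring

/-- If a translation invariant intensity measure concentrated on finite
nonempty subsets of `ℤ^d` gives vanishing mass to high-density sets, then the
normalized double sum of `exp(ν(S_i ∩ S_j))` over the box converges to `1`. -/
theorem stmt_8 {d : ℕ} (hd : 1 ≤ d) [MeasurableSpace (Set (Fin d → ℤ))]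
    (ν : Measure (Set (Fin d → ℤ))) [SigmaFinite ν]
    (hconc : ν {Δ : Set (Fin d → ℤ) | ¬(Δ.Finite ∧ Δ.Nonempty)} = 0)
    (hm : ∀ i : Fin d → ℤ, MeasurableSet {Δ : Set (Fin d → ℤ) | i ∈ Δ})
    (hinv : ∀ x : Fin d → ℤ,
      MeasurePreserving (Set.image (fun y => x + y)) ν ν)
    (hfin : ∀ i : Fin d → ℤ, ν {Δ : Set (Fin d → ℤ) | i ∈ Δ} ≠ ⊤)
    (Λ : ℕ → Finset (Fin d → ℤ))
    (hΛ : ∀ n, Λ n = Fintype.piFinset fun _ : Fin d => Finset.Icc (-(n : ℤ)) n)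
    (hdens : ∀ δ : ℝ, δ ∈ Set.Ioo (0 : ℝ) 1 →
      Tendsto (fun n : ℕ =>
          ν {Δ : Set (Fin d → ℤ) |
            δ * ((Λ n).card : ℝ) ≤ ((Δ ∩ (↑(Λ n) : Set (Fin d → ℤ))).ncard : ℝ)})
        atTop (nhds 0)) :
    Tendsto (fun n : ℕ =>
        ((2 * (n : ℝ) + 1) ^ (2 * d))⁻¹ *
          ∑ i ∈ Λ n, ∑ j ∈ Λ n,
            Real.exp ((ν ({Δ : Set (Fin d → ℤ) | i ∈ Δ} ∩
                {Δ : Set (Fin d → ℤ) | j ∈ Δ})).toReal))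
      atTop (nhds 1) :=
  stmt_8_general ν hm hinv hfin Λ hΛ hdens
end

section
/- Let μ be a probability measure on {0,1}^Z that is translation invariant and satisfies: (i) μ(X(0)=1 | X ≡ 0 on (−n,−1]) ≥ ρ for all n (with ρ > 0), and (ii) for each i with −n < i ≤ 0, μ(X(0)=1 | X ≡ 0 on (−∞,−n], E_i) ≥ μ(X(0)=1), where E_i = {X ≡ 0 on (−n,i), X(i)=1}. Then μ(X(0)=1) − μ(X(0)=1 | X ≡ 0 on (−∞,−n]) ≤ (1−ρ)^n. -/
open MeasureTheory ProbabilityTheory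

set_option linter.unusedSectionVars false

section S15aux
open Filter

namespace S15
def One (i : ℤ) : Set (ℤ → Bool) := {ω | ω i = true}
def Zle (n : ℤ) : Set (ℤ → Bool) := {ω | ∀ i : ℤ, i ≤ n → ω i = false}
def Zio (a b : ℤ) : Set (ℤ → Bool) := {ω | ∀ l : ℤ, a < l → l < b → ω l = false}
def E (n i : ℤ) : Set (ℤ → Bool) := Zle (-n) ∩ Zio (-n) i ∩ One i

lemma mcoord (i : ℤ) (b : Bool) : MeasurableSet {ω : ℤ → Bool | ω i = b} := by
  have : {ω : ℤ → Bool | ω i = b} = (fun ω : ℤ → Bool => ω i) ⁻¹' {b} := by ext ω; simp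
  rw [this]; exact measurable_pi_apply i (measurableSet_singleton b)

lemma mOne (i : ℤ) : MeasurableSet (One i) := mcoord i true

lemma mZle (n : ℤ) : MeasurableSet (Zle n) := by
  have : Zle n = ⋂ i : ℤ, ⋂ (_ : i ≤ n), {ω : ℤ → Bool | ω i = false} := by
    ext ω; simp [Zle, Set.mem_iInter]
  rw [this]
  exact MeasurableSet.iInter fun i => MeasurableSet.iInter fun _ => mcoord i false

lemma mZio (a b : ℤ) : MeasurableSet (Zio a b) := by
  have : Zio a b = ⋂ i : ℤ, ⋂ (_ : a < i), ⋂ (_ : i < b), {ω : ℤ → Bool | ω i = false} := by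
    ext ω; simp [Zio, Set.mem_iInter]
  rw [this]
  exact MeasurableSet.iInter fun i => MeasurableSet.iInter fun _ =>
    MeasurableSet.iInter fun _ => mcoord i false

lemma mE (n i : ℤ) : MeasurableSet (E n i) :=
  ((mZle (-n)).inter (mZio (-n) i)).inter (mOne i)

lemma preim_One (x i : ℤ) :
    (fun ω : ℤ → Bool => fun y => ω (y + x)) ⁻¹' One i = One (i + x) := rfl

lemma preim_Zle (x n : ℤ) :
    (fun ω : ℤ → Bool => fun y => ω (y + x)) ⁻¹' Zle n = Zle (n + x) := by
  ext ω
  constructor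
  · intro h j hj
    have := h (j - x) (by omega)
    simpa using this
  · intro h i hi
    exact h (i + x) (by omega)

lemma iInter_window : (⋂ m : ℕ, Zio (-(m:ℤ)) 0) = Zle (-1) := by
  ext ω
  simp only [Set.mem_iInter, Zio, Zle, Set.mem_setOf_eq]
  constructor
  · intro h i hi
    exact h ((-i).toNat + 1) i (by omega) (by omega)
  · intro h m l hl1 hl2
    exact h l (by omega)

lemma anti_window : Antitone (fun m : ℕ => Zio (-(m:ℤ)) 0) := by
  intro m m' h ω hω l hl1 hl2
  exact hω l (by omega) hl2

variable (μ : Measure (ℤ → Bool)) [IsProbabilityMeasure μ]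

lemma mul_of_cond {s t : Set (ℤ → Bool)} (hs : MeasurableSet s) {r : ENNReal}
    (h : r ≤ ProbabilityTheory.cond μ s t) : r * μ s ≤ μ (s ∩ t) := by
  rw [cond_apply hs] at h
  rcases eq_or_ne (μ s) 0 with h0 | h0
  · simp [h0]
  · calc r * μ s ≤ ((μ s)⁻¹ * μ (s ∩ t)) * μ s := mul_le_mul_left h _
      _ = μ (s ∩ t) * ((μ s)⁻¹ * μ s) := by ring
      _ = μ (s ∩ t) := by rw [ENNReal.inv_mul_cancel h0 (measure_ne_top μ s), mul_one]

lemma cond_le_one (s t : Set (ℤ → Bool)) (hs : MeasurableSet s) :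
    ProbabilityTheory.cond μ s t ≤ 1 := by
  rw [cond_apply hs]
  rcases eq_or_ne (μ s) 0 with h0 | h0
  · have : μ (s ∩ t) = 0 := le_antisymm (h0 ▸ measure_mono Set.inter_subset_left) zero_le
    simp [this]
  · calc (μ s)⁻¹ * μ (s ∩ t) ≤ (μ s)⁻¹ * μ s :=
        mul_le_mul_right (measure_mono Set.inter_subset_left) _
      _ = 1 := ENNReal.inv_mul_cancel h0 (measure_ne_top μ s)

lemma base {ρ : ℝ}
    (hi1 : ∀ m : ℕ, ENNReal.ofReal ρ ≤
      ProbabilityTheory.cond μ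
        {ω | ∀ i : ℤ, -(m : ℤ) < i → i ≤ -1 → ω i = false} {ω | ω 0 = true}) :
    ENNReal.ofReal ρ * μ (Zle (-1)) ≤ μ (Zle (-1) ∩ One 0) := by
  have hset : ∀ m : ℕ, {ω : ℤ → Bool | ∀ i : ℤ, -(m : ℤ) < i → i ≤ -1 → ω i = false}
      = Zio (-(m:ℤ)) 0 := by
    intro m; ext ω
    simp only [Set.mem_setOf_eq, Zio]
    constructor
    · intro h l h1 h2; exact h l h1 (by omega)
    · intro h l h1 h2; exact h l h1 (by omega)
  have key : ∀ m : ℕ, ENNReal.ofReal ρ * μ (Zio (-(m:ℤ)) 0) ≤ μ (Zio (-(m:ℤ)) 0 ∩ One 0) := by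
    intro m
    have h := hi1 m
    rw [hset m] at h
    exact mul_of_cond μ (mZio _ _) h
  have t1 : Tendsto (fun m : ℕ => μ (Zio (-(m:ℤ)) 0)) atTop (nhds (μ (Zle (-1)))) := by
    rw [← iInter_window]
    exact tendsto_measure_iInter_atTop (fun m => (mZio _ _).nullMeasurableSet)
      anti_window ⟨0, measure_ne_top μ _⟩
  have t2 : Tendsto (fun m : ℕ => μ (Zio (-(m:ℤ)) 0 ∩ One 0)) atTop
      (nhds (μ (Zle (-1) ∩ One 0))) := by
    have : Zle (-1) ∩ One 0 = ⋂ m : ℕ, (Zio (-(m:ℤ)) 0 ∩ One 0) := by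
      rw [← Set.iInter_inter, iInter_window]
    rw [this]
    exact tendsto_measure_iInter_atTop
      (fun m => ((mZio _ _).inter (mOne 0)).nullMeasurableSet)
      (fun a b hab => Set.inter_subset_inter (anti_window hab) le_rfl)
      ⟨0, measure_ne_top μ _⟩
  have t1' : Tendsto (fun m : ℕ => ENNReal.ofReal ρ * μ (Zio (-(m:ℤ)) 0)) atTop
      (nhds (ENNReal.ofReal ρ * μ (Zle (-1)))) :=
    ENNReal.Tendsto.const_mul t1 (Or.inr ENNReal.ofReal_ne_top)
  exact le_of_tendsto_of_tendsto' t1' t2 key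

lemma shifted {ρ : ℝ}
    (hti : ∀ x : ℤ, MeasurePreserving (fun ω : ℤ → Bool => fun y => ω (y + x)) μ μ)
    (hi1 : ∀ m : ℕ, ENNReal.ofReal ρ ≤
      ProbabilityTheory.cond μ
        {ω | ∀ i : ℤ, -(m : ℤ) < i → i ≤ -1 → ω i = false} {ω | ω 0 = true})
    (x : ℤ) :
    ENNReal.ofReal ρ * μ (Zle (x - 1)) ≤ μ (Zle (x - 1) ∩ One x) := by
  have h1 : μ (Zle (x - 1)) = μ (Zle (-1)) := by
    have := (hti x).measure_preimage (mZle (-1)).nullMeasurableSet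
    rw [preim_Zle] at this
    rw [show x - 1 = -1 + x by ring, this]
  have h2 : μ (Zle (x - 1) ∩ One x) = μ (Zle (-1) ∩ One 0) := by
    have := (hti x).measure_preimage ((mZle (-1)).inter (mOne 0)).nullMeasurableSet
    rw [Set.preimage_inter, preim_Zle, preim_One] at this
    rw [show (-1:ℤ) + x = x - 1 by ring, show (0:ℤ) + x = x by ring] at this
    exact this
  rw [h1, h2]
  exact base μ hi1

lemma split (x : ℤ) : μ (Zle (x - 1)) = μ (Zle x) + μ (Zle (x - 1) ∩ One x) := by
  have hu : Zle (x - 1) = Zle x ∪ (Zle (x - 1) ∩ One x) := by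
    ext ω
    constructor
    · intro h
      cases hb : ω x with
      | false =>
        left; intro i hi
        rcases eq_or_ne i x with rfl | hne
        · exact hb
        · exact h i (by omega)
      | true => exact Or.inr ⟨h, hb⟩
    · rintro (h | ⟨h, _⟩) i hi
      · exact h i (by omega)
      · exact h i hi
  have hd : Disjoint (Zle x) (Zle (x - 1) ∩ One x) := by
    rw [Set.disjoint_left]
    rintro ω h ⟨_, h2⟩
    have := h x le_rfl
    simp only [One, Set.mem_setOf_eq] at h2
    rw [this] at h2; exact Bool.false_ne_true h2
  conv_lhs => rw [hu]
  rw [measure_union hd ((mZle _).inter (mOne _))]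

lemma mem_E_of (n : ℕ) (ω : ℤ → Bool) (hω : ω ∈ Zle (-(n:ℤ)))
    (h : ∃ i ∈ Finset.Ioc (-(n:ℤ)) 0, ω i = true) :
    ∃ i ∈ Finset.Ioc (-(n:ℤ)) 0, ω ∈ E n i := by
  classical
  set S := (Finset.Ioc (-(n:ℤ)) 0).filter (fun i => ω i = true) with hS
  have hSne : S.Nonempty := by
    obtain ⟨i, hi1, hi2⟩ := h
    exact ⟨i, Finset.mem_filter.2 ⟨hi1, hi2⟩⟩
  set i₀ := S.min' hSne with hi₀
  have hi₀S : i₀ ∈ S := S.min'_mem hSne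
  have hi₀Ioc : i₀ ∈ Finset.Ioc (-(n:ℤ)) 0 := (Finset.mem_filter.1 hi₀S).1
  refine ⟨i₀, hi₀Ioc, ⟨hω, ?_⟩, (Finset.mem_filter.1 hi₀S).2⟩
  intro l hl1 hl2
  by_contra hfalse
  have hlt : ω l = true := by simpa using hfalse
  have hmem : l ∈ S := Finset.mem_filter.2
    ⟨Finset.mem_Ioc.2 ⟨hl1, by have := (Finset.mem_Ioc.1 hi₀Ioc).2; omega⟩, hlt⟩
  have := S.min'_le l hmem
  omega

lemma disjE (n : ℕ) : (↑(Finset.Ioc (-(n:ℤ)) 0) : Set ℤ).PairwiseDisjoint (E n) := by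
  intro i hi j hj hij
  simp only [Finset.coe_Ioc, Set.mem_Ioc] at hi hj
  dsimp only [Function.onFun]
  rw [Set.disjoint_left]
  rcases lt_or_gt_of_ne hij with h | h
  · rintro ω ⟨⟨_, _⟩, h3⟩ ⟨⟨_, h5⟩, _⟩
    have := h5 i hi.1 h
    simp only [One, Set.mem_setOf_eq] at h3
    rw [this] at h3; exact Bool.false_ne_true h3
  · rintro ω ⟨⟨_, h2⟩, _⟩ ⟨⟨_, _⟩, h6⟩
    have := h2 j hj.1 h
    simp only [One, Set.mem_setOf_eq] at h6
    rw [this] at h6; exact Bool.false_ne_true h6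

lemma unionT (n : ℕ) (hn : 1 ≤ n) :
    Zle (-(n:ℤ)) ∩ One 0 = ⋃ i ∈ Finset.Ioc (-(n:ℤ)) 0, (E n i ∩ One 0) := by
  ext ω
  simp only [Set.mem_iUnion, Set.mem_inter_iff, exists_prop]
  constructor
  · rintro ⟨h1, h2⟩
    obtain ⟨i, hi, hE⟩ := mem_E_of n ω h1
      ⟨0, Finset.mem_Ioc.2 ⟨by omega, le_rfl⟩, h2⟩
    exact ⟨i, hi, hE, h2⟩
  · rintro ⟨i, _, ⟨⟨h1, _⟩, _⟩, h4⟩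
    exact ⟨h1, h4⟩

lemma partitionA (n : ℕ) :
    Zle (-(n:ℤ)) = Zle 0 ∪ ⋃ i ∈ Finset.Ioc (-(n:ℤ)) 0, E n i := by
  ext ω
  simp only [Set.mem_union, Set.mem_iUnion, exists_prop]
  constructor
  · intro h
    by_cases hz : ∀ i ∈ Finset.Ioc (-(n:ℤ)) 0, ω i = false
    · left
      intro i hi
      rcases le_or_gt i (-(n:ℤ)) with h' | h'
      · exact h i h'
      · exact hz i (Finset.mem_Ioc.2 ⟨h', hi⟩)
    · right
      push_neg at hz
      obtain ⟨i, hi1, hi2⟩ := hz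
      have : ω i = true := by simpa using hi2
      exact mem_E_of n ω h ⟨i, hi1, this⟩
  · rintro (h | ⟨i, _, ⟨⟨h1, _⟩, _⟩⟩)
    · intro i hi; exact h i (by omega)
    · exact h1

lemma disjFA (n : ℕ) : Disjoint (Zle 0) (⋃ i ∈ Finset.Ioc (-(n:ℤ)) 0, E n i) := by
  rw [Set.disjoint_left]
  rintro ω h hmem
  simp only [Set.mem_iUnion, exists_prop] at hmem
  obtain ⟨i, hi, ⟨⟨_, _⟩, h3⟩⟩ := hmem
  have hi' := (Finset.mem_Ioc.1 hi).2
  have := h i hi'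
  simp only [One, Set.mem_setOf_eq] at h3
  rw [this] at h3; exact Bool.false_ne_true h3

end S15

end S15aux

open S15

/-- One-sided mixing bound on `{0,1}^ℤ`: under the uniform conditional density
bound (i) and the comparison bound (ii), the conditional probability of a `1`
at the origin given all zeros on `(−∞,−n]` is within `(1−ρ)^n` of the
unconditional probability. -/
theorem stmt_15 (μ : Measure (ℤ → Bool)) [IsProbabilityMeasure μ]
    (hti : ∀ x : ℤ, MeasurePreserving (fun ω : ℤ → Bool => fun y => ω (y + x)) μ μ)
    (ρ : ℝ) (hρ : 0 < ρ) (n : ℕ) (hn : 1 ≤ n)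
    (hpos : μ {ω | ∀ i : ℤ, i ≤ -(n : ℤ) → ω i = false} ≠ 0)
    -- (i): uniform lower bound given zeros on the finite interval (−m,−1]
    (hi1 : ∀ m : ℕ, ENNReal.ofReal ρ ≤
      ProbabilityTheory.cond μ
        {ω | ∀ i : ℤ, -(m : ℤ) < i → i ≤ -1 → ω i = false} {ω | ω 0 = true})
    -- (ii): conditioning additionally on E_i does not decrease the probability
    (hi2 : ∀ i : ℤ, -(n : ℤ) < i → i ≤ 0 →
      μ {ω | ω 0 = true} ≤
        ProbabilityTheory.cond μ
          ({ω | ∀ l : ℤ, l ≤ -(n : ℤ) → ω l = false} ∩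
            {ω | ∀ l : ℤ, -(n : ℤ) < l → l < i → ω l = false} ∩
            {ω | ω i = true})
          {ω | ω 0 = true}) :
    (μ {ω | ω 0 = true}).toReal -
        (ProbabilityTheory.cond μ {ω | ∀ i : ℤ, i ≤ -(n : ℤ) → ω i = false}
          {ω | ω 0 = true}).toReal ≤ (1 - ρ) ^ n := by
  classical
  -- identify sets
  have hA : ({ω : ℤ → Bool | ∀ i : ℤ, i ≤ -(n : ℤ) → ω i = false}) = Zle (-(n:ℤ)) := rfl
  have hTset : ({ω : ℤ → Bool | ω 0 = true}) = One 0 := rfl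
  rw [hA, hTset] at *
  set A := Zle (-(n:ℤ)) with hAdef
  set F := Zle 0 with hFdef
  set T := One 0 with hTdef
  set I := Finset.Ioc (-(n:ℤ)) 0 with hIdef
  -- ρ ≤ 1
  have hρ1 : ρ ≤ 1 := by
    have h := (hi1 1).trans (cond_le_one μ _ _ (by
      have : {ω : ℤ → Bool | ∀ i : ℤ, -(1 : ℤ) < i → i ≤ -1 → ω i = false}
          = Zio (-1) 0 := by
        ext ω; simp only [Set.mem_setOf_eq, Zio]
        constructor
        · intro h l h1 h2; exact h l h1 (by omega)
        · intro h l h1 h2; exact h l h1 (by omega)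
      rw [show ((1:ℕ):ℤ) = 1 by norm_num]
      rw [this]; exact mZio _ _))
    exact ENNReal.ofReal_le_one.1 h
  have h1ρ : 0 ≤ 1 - ρ := by linarith
  -- step inequality
  have hstep : ∀ k : ℕ, (μ (Zle (-(k:ℤ)))).toReal ≤ (1 - ρ) * (μ (Zle (-(k:ℤ) - 1))).toReal := by
    intro k
    have e1 := split μ (-(k:ℤ))
    have e2 := shifted μ hti hi1 (-(k:ℤ))
    have e1' : (μ (Zle (-(k:ℤ) - 1))).toReal
        = (μ (Zle (-(k:ℤ)))).toReal + (μ (Zle (-(k:ℤ) - 1) ∩ One (-(k:ℤ)))).toReal := by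
      rw [e1, ENNReal.toReal_add (measure_ne_top μ _) (measure_ne_top μ _)]
    have e2' : ρ * (μ (Zle (-(k:ℤ) - 1))).toReal
        ≤ (μ (Zle (-(k:ℤ) - 1) ∩ One (-(k:ℤ)))).toReal := by
      have := ENNReal.toReal_mono (measure_ne_top μ _) e2
      rwa [ENNReal.toReal_mul, ENNReal.toReal_ofReal hρ.le] at this
    linarith
  -- induction
  have hind : ∀ m : ℕ, (μ F).toReal ≤ (1 - ρ) ^ m * (μ (Zle (-(m:ℤ)))).toReal := by
    intro m
    induction m with
    | zero => simp [hFdef]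
    | succ m ih =>
      have h1 := hstep m
      have h2 : (1 - ρ) ^ m * (μ (Zle (-(m:ℤ)))).toReal
          ≤ (1 - ρ) ^ m * ((1 - ρ) * (μ (Zle (-(m:ℤ) - 1))).toReal) :=
        mul_le_mul_of_nonneg_left h1 (pow_nonneg h1ρ m)
      have hcast : -((m:ℤ) + 1) = -(m:ℤ) - 1 := by ring
      calc (μ F).toReal ≤ (1 - ρ) ^ m * (μ (Zle (-(m:ℤ)))).toReal := ih
        _ ≤ (1 - ρ) ^ m * ((1 - ρ) * (μ (Zle (-(m:ℤ) - 1))).toReal) := h2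
        _ = (1 - ρ) ^ (m + 1) * (μ (Zle (-((m+1:ℕ):ℤ)))).toReal := by
            push_cast
            rw [hcast]
            ring
  have hF : (μ F).toReal ≤ (1 - ρ) ^ n * (μ A).toReal := hind n
  -- partition of A
  have hmeasE : ∀ i ∈ I, MeasurableSet (E n i) := fun i _ => mE n i
  have hApart : μ A = μ F + ∑ i ∈ I, μ (E n i) := by
    conv_lhs => rw [hAdef, partitionA n]
    rw [measure_union (disjFA n) (I.measurableSet_biUnion hmeasE),
      measure_biUnion_finset (disjE n) hmeasE]
  have hTpart : μ (A ∩ T) = ∑ i ∈ I, μ (E n i ∩ T) := by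
    rw [hAdef, hTdef, unionT n hn,
      measure_biUnion_finset ((disjE n).mono (fun i => Set.inter_subset_left))
        (fun i _ => (mE n i).inter (mOne 0))]
  -- per-i bound
  have hper : ∀ i ∈ I, μ T * μ (E n i) ≤ μ (E n i ∩ T) := by
    intro i hi
    rw [Finset.mem_Ioc] at hi
    exact mul_of_cond μ (mE n i) (hi2 i hi.1 hi.2)
  have hsum : μ T * ∑ i ∈ I, μ (E n i) ≤ μ (A ∩ T) := by
    rw [hTpart, Finset.mul_sum]
    exact Finset.sum_le_sum hper
  -- convert to reals
  have hEfin : ∀ i ∈ I, μ (E n i) ≠ ⊤ := fun i _ => measure_ne_top μ _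
  set a := (μ A).toReal with ha
  set f := (μ F).toReal with hf
  set t := (μ T).toReal with ht
  set c := (μ (A ∩ T)).toReal with hc
  set s := ∑ i ∈ I, (μ (E n i)).toReal with hs
  have hApart' : a = f + s := by
    rw [ha, hApart, ENNReal.toReal_add (measure_ne_top μ _)
      (ENNReal.sum_ne_top.2 hEfin), ENNReal.toReal_sum hEfin]
  have hsum' : t * s ≤ c := by
    have := ENNReal.toReal_mono (measure_ne_top μ _) hsum
    rwa [ENNReal.toReal_mul, ENNReal.toReal_sum hEfin] at this
  have posA : 0 < a := ENNReal.toReal_pos hpos (measure_ne_top μ A)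
  have ht1 : t ≤ 1 := by
    rw [ht]
    have : μ T ≤ 1 := prob_le_one
    calc (μ T).toReal ≤ (1 : ENNReal).toReal :=
        ENNReal.toReal_mono ENNReal.one_ne_top this
      _ = 1 := ENNReal.toReal_one
  have hf0 : 0 ≤ f := ENNReal.toReal_nonneg
  -- rewrite the conditional probability
  have hcond : (ProbabilityTheory.cond μ A T).toReal = a⁻¹ * c := by
    rw [cond_apply (mZle _), ENNReal.toReal_mul, ENNReal.toReal_inv]
  rw [hcond]
  have key : t * a - c ≤ (1 - ρ) ^ n * a := by nlinarith
  have h2 : (t - a⁻¹ * c) * a ≤ (1 - ρ) ^ n * a := by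
    rw [sub_mul, mul_comm a⁻¹ c, mul_assoc, inv_mul_cancel₀ (ne_of_gt posA), mul_one]
    linarith
  exact le_of_mul_le_mul_right h2 posA
end
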